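/- The polynomial semiring ℝ⁺[x] is not Noetherian: there is a surjective semiring homomorphism ℝ⁺[x] → B[x] induced by the semiring homomorphism ℝ⁺ → B sending r ↦ 1 for r ≠ 0 and 0 ↦ 0, and B[x] is not Noetherian; since a homomorphic image of a Noetherian semiring is Noetherian, ℝ⁺[x] is not Noetherian. -/

import Mathlib

/-- The Boolean semiring `B = {0,1}` with `1 + 1 = 1`. -/
inductive B : Type
  | zero
  | one
deriving DecidableEq

instance : Fintype B := Fintype.ofList [B.zero, B.one] (fun x => by cases x <;> simp)

namespace B

def add : B → B → B
  | zero, b => b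
  | one, _ => one

def mul : B → B → B
  | zero, _ => zero
  | one, b => b

instance : Zero B := ⟨zero⟩
instance : One B := ⟨one⟩
instance : Add B := ⟨add⟩
instance : Mul B := ⟨mul⟩

instance : CommSemiring B where
  add_assoc := by decide
  zero_add := by decide
  add_zero := by decide
  add_comm := by decide
  mul_assoc := by decide
  one_mul := by decide
  mul_one := by decide
  left_distrib := by decide
  right_distrib := by decide
  zero_mul := by decide
  mul_zero := by decide
  mul_comm := by decide
  nsmul := nsmulRec
  npow := npowRec

end B

section Chain

open Polynomial

variable {R : Type*} [CommSemiring R]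
  (hadd : ∀ a b : R, a + b = 0 → a = 0 ∧ b = 0)
  (hmul : ∀ a b : R, a * b = 0 → a = 0 ∨ b = 0)

include hadd in
theorem chain_sum_eq_zero {ι : Type*} {s : Finset ι} {f : ι → R}
    (hs : ∑ i ∈ s, f i = 0) : ∀ i ∈ s, f i = 0 := by
  classical
  induction s using Finset.induction_on with
  | empty => simp
  | insert _ _ hx ih =>
    rw [Finset.sum_insert hx] at hs
    obtain ⟨h1, h2⟩ := hadd _ _ hs
    intro i hi
    rcases Finset.mem_insert.mp hi with rfl | hi
    · exact h1
    · exact ih h2 i hi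

include hadd hmul in
/-- chain ideal -/
def chainIdeal (n : ℕ) : Ideal (Polynomial R) where
  carrier := {p | p.coeff 0 = 0 ∧ (p.coeff 1 ≠ 0 → ∃ k, 2 ≤ k ∧ k ≤ n + 2 ∧ p.coeff k ≠ 0)}
  zero_mem' := by simp
  add_mem' := by
    rintro p q ⟨hp0, hp1⟩ ⟨hq0, hq1⟩
    refine ⟨by simp [hp0, hq0], fun h => ?_⟩
    rw [coeff_add] at h
    have : p.coeff 1 ≠ 0 ∨ q.coeff 1 ≠ 0 := by
      by_contra hc
      push_neg at hc
      simp [hc.1, hc.2] at h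
    rcases this with h1 | h1
    · obtain ⟨k, hk2, hkn, hk⟩ := hp1 h1
      refine ⟨k, hk2, hkn, fun hc => ?_⟩
      rw [coeff_add] at hc
      exact hk (hadd _ _ hc).1
    · obtain ⟨k, hk2, hkn, hk⟩ := hq1 h1
      refine ⟨k, hk2, hkn, fun hc => ?_⟩
      rw [coeff_add] at hc
      exact hk (hadd _ _ hc).2
  smul_mem' := by
    rintro q p ⟨hp0, hp1⟩
    simp only [smul_eq_mul, Set.mem_setOf_eq]
    constructor
    · rw [mul_coeff_zero, hp0, mul_zero]
    · intro h
      have h1 : (q * p).coeff 1 = q.coeff 0 * p.coeff 1 + q.coeff 1 * p.coeff 0 := by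
        rw [Polynomial.coeff_mul]
        simp [Finset.Nat.antidiagonal_succ, Prod.map]
      rw [h1, hp0, mul_zero, add_zero] at h
      have hq0 : q.coeff 0 ≠ 0 := fun hc => h (by rw [hc, zero_mul])
      have hp1' : p.coeff 1 ≠ 0 := fun hc => h (by rw [hc, mul_zero])
      obtain ⟨k, hk2, hkn, hk⟩ := hp1 hp1'
      refine ⟨k, hk2, hkn, fun hc => ?_⟩
      rw [Polynomial.coeff_mul] at hc
      have := chain_sum_eq_zero hadd hc (0, k)
        (by simp)
      rcases hmul _ _ this with h' | h'
      · exact hq0 h'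
      · exact hk h'

theorem chainIdeal_strictMono (h10 : (1 : R) ≠ 0) :
    StrictMono (fun n => chainIdeal hadd hmul n) := by
  have hmem : ∀ n m : ℕ, (X + X ^ (m + 3) : Polynomial R) ∈ chainIdeal hadd hmul n ↔
      m + 3 ≤ n + 2 := by
    intro n m
    constructor
    · rintro ⟨-, h1⟩
      have hc1 : (X + X ^ (m + 3) : Polynomial R).coeff 1 ≠ 0 := by
        simp [coeff_X, coeff_X_pow, h10]
      obtain ⟨k, hk2, hkn, hk⟩ := h1 hc1
      have : k = m + 3 := by
        by_contra hne
        apply hk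
        have hk1 : k ≠ 1 := by omega
        simp [coeff_add, coeff_X, coeff_X_pow, Ne.symm hk1, hne]
      omega
    · intro hm
      refine ⟨by simp, fun _ => ⟨m + 3, by omega, hm, ?_⟩⟩
      have : (m + 3 : ℕ) ≠ 1 := by omega
      simp [coeff_add, coeff_X, coeff_X_pow, this, h10]
  have hmono : Monotone (fun n => chainIdeal hadd hmul n) := by
    intro a b hab p hp
    obtain ⟨h0, h1⟩ := hp
    exact ⟨h0, fun h => by
      obtain ⟨k, hk2, hkn, hk⟩ := h1 h
      exact ⟨k, hk2, by omega, hk⟩⟩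
  have key : ∀ a b : ℕ, a < b → chainIdeal hadd hmul a ≠ chainIdeal hadd hmul b := by
    intro a b hlt heq
    have h1 : (X + X ^ (a + 3) : Polynomial R) ∈ chainIdeal hadd hmul b :=
      (hmem b a).mpr (by omega)
    rw [← heq] at h1
    have := (hmem a a).mp h1
    omega
  refine hmono.strictMono_of_injective fun a b hab => ?_
  rcases lt_trichotomy a b with h | h | h
  · exact absurd hab (key a b h)
  · exact h
  · exact absurd hab.symm (key b a h)

end Chain

/-- `ℝ⁺[x]` is not Noetherian: there is a semiring homomorphism
`g : ℝ⁺ → B` with `g r = 1` for `r ≠ 0` (and `g 0 = 0`) inducing a surjective semiring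
homomorphism `ℝ⁺[x] → B[x]`, `B[x]` is not Noetherian, and `ℝ⁺[x]` itself admits a
strictly ascending non-terminating chain of ideals. -/
theorem stmt_14 :
    (∃ g : NNReal →+* B, (∀ r : NNReal, r ≠ 0 → g r = 1) ∧ g 0 = 0 ∧
      Function.Surjective (Polynomial.mapRingHom g)) ∧
    (∃ f : ℕ → Ideal (Polynomial B), StrictMono f) ∧
    (∃ f : ℕ → Ideal (Polynomial NNReal), StrictMono f) := by
  refine ⟨?_, ?_, ?_⟩
  · refine ⟨⟨⟨⟨fun r => if r = 0 then 0 else 1, by simp⟩, ?_⟩, ?_, ?_⟩, ?_, ?_, ?_⟩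
    · intro a b
      by_cases ha : a = 0 <;> by_cases hb : b = 0 <;>
        simp [ha, hb, mul_eq_zero] <;> decide
    · simp
    · intro a b
      by_cases ha : a = 0 <;> by_cases hb : b = 0 <;>
        simp [ha, hb] <;> first | decide | (intro h; exact absurd (add_eq_zero.mp h) (by simp [ha, hb]))
    · intro r hr; simp [hr]
    · simp
    · have hs : Function.Surjective (fun r : NNReal => if r = 0 then (0 : B) else 1) := by
        intro b
        cases b with
        | zero => exact ⟨0, by simp; rfl⟩
        | one => exact ⟨1, by norm_num; rfl⟩
      simpa using Polynomial.map_surjective _ hs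
  · exact ⟨_, chainIdeal_strictMono (R := B) (by decide) (by decide) (by decide)⟩
  · refine ⟨_, chainIdeal_strictMono (R := NNReal) ?_ ?_ ?_⟩
    · intro a b h; exact add_eq_zero.mp h
    · intro a b h; exact mul_eq_zero.mp h
    · exact one_ne_zero
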